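/- arXiv:2310.19355 — 4 statements merged into one kernel-verified Lean document; each statement's English description precedes it below -/
import Mathlib

section
/- Knabe bound on connected graphs: Let G = (V, E) be a finite connected graph and let H = Σ_{(i,j)∈E} h_{i,j} be a self-adjoint operator on a finite-dimensional Hilbert space, where each h_{i,j} is an orthogonal projector. Suppose that for each vertex v, the subsystem operator A_v := (Σ_{j : (v,j)∈E} h_{v,j})² satisfies A_v ≥ Δ_v · Σ_{j : (v,j)∈E} h_{v,j} for some real Δ_v ≥ 0. Then H² ≥ 2(min_{v∈V} Δ_v − 1/2) H, and consequently the spectral gap of H is at least 2(min_v Δ_v − 1/2). -/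
/-!
Write `H = ∑ₑ hₑ` and `B v = ∑_{e ∋ v} hₑ`. Every edge has two endpoints, so `∑ᵥ B v = 2H`.
Expanding the squares, `∑ᵥ (B v)² = H² + H - D`, where `D` is the sum of `hₑ h_f` over ordered
pairs of disjoint edges: a pair `e = f` contributes `2hₑ` to the left (as `hₑ² = hₑ`), and two
distinct edges share at most one vertex. Hence, with `m = minᵥ Δ v`,
`H² - (2m - 1)H = ∑ᵥ ((B v)² - m B v) + D`. Every term is positive semidefinite: the local
ones by hypothesis since `m ≤ Δ v`, and `hₑ h_f` for disjoint `e, f` because it is a product of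
commuting projections. Evaluating on an eigenvector of eigenvalue `λ > 0` gives
`λ² ≥ (2m - 1)λ`.
-/

open ComplexOrder Finset Matrix
open scoped MatrixOrder

namespace Sym2

variable {V : Type*} [DecidableEq V]

theorem card_toFinset_inter_le_one {e f : Sym2 V} (hef : e ≠ f) :
    #(e.toFinset ∩ f.toFinset) ≤ 1 :=
  card_le_one.2 fun x hx y hy => by
    by_contra hxy
    simp only [mem_inter, mem_toFinset] at hx hy
    exact hef (eq_of_ne_mem hxy hx.1 hy.1 hx.2 hy.2)

theorem mul_add_ite_eq_card_smul_add_ite {R : Type*} [NonUnitalNonAssocSemiring R]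
    {e f : Sym2 V} (he : ¬ e.IsDiag) (h : Sym2 V → R) (hidem : IsIdempotentElem (h e)) :
    h e * h f + (if e = f then h e else 0)
      = #(e.toFinset ∩ f.toFinset) • (h e * h f)
        + (if Disjoint e.toFinset f.toFinset then h e * h f else 0) := by
  by_cases hef : e = f
  · subst hef
    simp [card_toFinset_of_not_isDiag e he, hidem.eq, two_nsmul]
  by_cases hdisj : Disjoint e.toFinset f.toFinset
  · simp [hef, hdisj, disjoint_iff_inter_eq_empty.1 hdisj]
  · have hcard : #(e.toFinset ∩ f.toFinset) = 1 :=
      le_antisymm (card_toFinset_inter_le_one hef)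
        (one_le_card.2 (not_disjoint_iff_nonempty_inter.1 hdisj))
    simp [hef, hdisj, hcard]

variable [Fintype V]

theorem sum_sum_filter_mem {M : Type*} [AddCommMonoid M] (E : Finset (Sym2 V))
    (hE : ∀ e ∈ E, ¬ e.IsDiag) (g : Sym2 V → M) :
    ∑ v, ∑ e ∈ E with v ∈ e, g e = 2 • ∑ e ∈ E, g e := by
  simp_rw [sum_filter]
  rw [sum_comm, smul_sum]
  refine sum_congr rfl fun e he => ?_
  rw [← sum_filter, sum_const, ← card_toFinset_of_not_isDiag e (hE e he)]
  congr 2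
  ext v; simp

theorem sum_mul_sum_filter_mem {R : Type*} [NonUnitalNonAssocSemiring R] (E : Finset (Sym2 V))
    (h : Sym2 V → R) :
    ∑ v, (∑ e ∈ E with v ∈ e, h e) * (∑ f ∈ E with v ∈ f, h f)
      = ∑ e ∈ E, ∑ f ∈ E, #(e.toFinset ∩ f.toFinset) • (h e * h f) := by
  simp_rw [sum_filter, sum_mul_sum, ite_mul, mul_ite, zero_mul, mul_zero, ite_self, ← ite_and]
  rw [sum_comm]
  refine sum_congr rfl fun e _ => ?_
  rw [sum_comm]
  refine sum_congr rfl fun f _ => ?_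
  rw [← sum_filter, sum_const]
  congr 2
  ext v; simp

theorem sum_mul_sum_add_sum_eq {R : Type*} [NonUnitalNonAssocSemiring R] (E : Finset (Sym2 V))
    (hE : ∀ e ∈ E, ¬ e.IsDiag) (h : Sym2 V → R) (hidem : ∀ e ∈ E, IsIdempotentElem (h e)) :
    (∑ e ∈ E, h e) * (∑ e ∈ E, h e) + ∑ e ∈ E, h e
      = ∑ v, (∑ e ∈ E with v ∈ e, h e) * (∑ f ∈ E with v ∈ f, h f)
        + ∑ e ∈ E, ∑ f ∈ E with Disjoint e.toFinset f.toFinset, h e * h f := by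
  rw [sum_mul_sum_filter_mem, sum_mul_sum]
  simp_rw [sum_filter, ← sum_add_distrib]
  refine sum_congr rfl fun e he => ?_
  calc ∑ f ∈ E, h e * h f + h e
      = ∑ f ∈ E, (h e * h f + if e = f then h e else 0) := by
        rw [sum_add_distrib, sum_ite_eq, if_pos he]
    _ = _ := sum_congr rfl fun f _ => mul_add_ite_eq_card_smul_add_ite (hE e he) h (hidem e he)

theorem mul_self_sub_smul_eq_sum_add {𝕜 R : Type*} [CommRing 𝕜] [Ring R] [Module 𝕜 R]
    (E : Finset (Sym2 V)) (hE : ∀ e ∈ E, ¬ e.IsDiag) (h : Sym2 V → R)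
    (hidem : ∀ e ∈ E, IsIdempotentElem (h e)) (m : 𝕜) :
    (∑ e ∈ E, h e) * (∑ e ∈ E, h e) - (2 * m - 1) • ∑ e ∈ E, h e
      = ∑ v, ((∑ e ∈ E with v ∈ e, h e) * (∑ f ∈ E with v ∈ f, h f)
          - m • ∑ e ∈ E with v ∈ e, h e)
        + ∑ e ∈ E, ∑ f ∈ E with Disjoint e.toFinset f.toFinset, h e * h f := by
  rw [sum_sub_distrib, ← smul_sum, sum_sum_filter_mem E hE,
    eq_sub_of_add_eq (sum_mul_sum_add_sum_eq E hE h hidem).symm]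
  module

end Sym2

theorem SimpleGraph.sum_neighborFinset_eq_sum_filter_mem {V M : Type*} [Fintype V]
    [DecidableEq V] [AddCommMonoid M] (G : SimpleGraph V) [DecidableRel G.Adj] (v : V)
    (g : Sym2 V → M) :
    ∑ u ∈ G.neighborFinset v, g s(v, u) = ∑ e ∈ G.edgeFinset with v ∈ e, g e := by
  have himage : G.incidenceFinset v = (G.neighborFinset v).image (s(v, ·)) := by
    ext e
    induction e with | _ a b => ?_
    simp only [mem_incidenceFinset, mk'_mem_incidenceSet_iff, mem_image, mem_neighborFinset,
      Sym2.eq_iff]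
    grind [Adj.symm]
  rw [← G.incidenceFinset_eq_filter, himage, sum_image]
  simp

theorem Matrix.PosSemidef.mul_self_sub_smul_of_le {n 𝕜 : Type*} [Fintype n] [RCLike 𝕜]
    {B : Matrix n n 𝕜} (hB : B.PosSemidef) {Δ m : ℝ}
    (hΔ : (B * B - (Δ : 𝕜) • B).PosSemidef) (hm : m ≤ Δ) :
    (B * B - (m : 𝕜) • B).PosSemidef := by
  have hgap : (((Δ - m : ℝ)) : 𝕜) • B |>.PosSemidef :=
    hB.smul (by exact_mod_cast sub_nonneg.2 hm)
  convert hΔ.add hgap using 1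
  push_cast
  module

theorem Matrix.IsHermitian.le_eigenvalues_of_posSemidef_mul_self_sub_smul
    {n 𝕜 : Type*} [Fintype n] [DecidableEq n] [RCLike 𝕜] {A : Matrix n n 𝕜}
    (hA : A.IsHermitian) (hA₀ : A.PosSemidef) {c : ℝ} (hc : (A * A - (c : 𝕜) • A).PosSemidef)
    {i : n} (hi : hA.eigenvalues i ≠ 0) : c ≤ hA.eigenvalues i := by
  set μ := hA.eigenvalues i
  set x : n → 𝕜 := ⇑(hA.eigenvectorBasis i)
  have hx : A *ᵥ x = (μ : 𝕜) • x := by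
    rw [hA.mulVec_eigenvectorBasis i, RCLike.real_smul_eq_coe_smul (K := 𝕜)]
  have hxx : RCLike.re (star x ⬝ᵥ x) = 1 := by
    simp [x, dotProduct_comm, ← EuclideanSpace.inner_eq_star_dotProduct]
  have hMx : (A * A - (c : 𝕜) • A) *ᵥ x = ((μ * μ - c * μ : ℝ) : 𝕜) • x := by
    rw [sub_mulVec, ← mulVec_mulVec, smul_mulVec, hx, mulVec_smul, hx, smul_smul]
    push_cast
    module
  have hquad : 0 ≤ μ * μ - c * μ := by
    have := hc.re_dotProduct_nonneg x
    rwa [hMx, dotProduct_smul, smul_eq_mul, RCLike.re_ofReal_mul, hxx, mul_one] at this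
  have hμ : 0 < μ := (hA₀.eigenvalues_nonneg i).lt_of_ne' hi
  exact le_of_mul_le_mul_right (sub_nonneg.1 hquad) hμ

theorem stmt2_general {V : Type} [Fintype V] [DecidableEq V]
    (G : SimpleGraph V) [DecidableRel G.Adj]
    {N : ℕ} (h : Sym2 V → Matrix (Fin N) (Fin N) ℂ)
    (hproj : ∀ e ∈ G.edgeFinset, (h e).IsHermitian ∧ h e * h e = h e)
    (hcomm : ∀ e ∈ G.edgeFinset, ∀ f ∈ G.edgeFinset,
      (∀ v : V, v ∈ e → v ∉ f) → Commute (h e) (h f))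
    (Δ : V → ℝ)
    (hsub : ∀ v : V,
      ((∑ u ∈ G.neighborFinset v, h s(v, u)) * (∑ u ∈ G.neighborFinset v, h s(v, u))
        - ((Δ v : ℂ)) • (∑ u ∈ G.neighborFinset v, h s(v, u))).PosSemidef)
    (hHerm : (∑ e ∈ G.edgeFinset, h e).IsHermitian) :
    ((∑ e ∈ G.edgeFinset, h e) * (∑ e ∈ G.edgeFinset, h e)
      - (((2 * ((⨅ v : V, Δ v) - 1/2) : ℝ) : ℂ)) • (∑ e ∈ G.edgeFinset, h e)).PosSemidef
    ∧ ∀ i, hHerm.eigenvalues i ≠ 0 →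
        2 * ((⨅ v : V, Δ v) - 1/2) ≤ hHerm.eigenvalues i := by
  set m := ⨅ v, Δ v
  set E := G.edgeFinset
  simp_rw [G.sum_neighborFinset_eq_sum_filter_mem] at hsub
  have hE : ∀ e ∈ E, ¬ e.IsDiag := fun e he =>
    G.not_isDiag_of_mem_edgeSet (SimpleGraph.mem_edgeFinset.1 he)
  have hstar : ∀ e ∈ E, IsStarProjection (h e) := fun e he => ⟨(hproj e he).2, (hproj e he).1⟩
  have hpsd : ∀ e ∈ E, (h e).PosSemidef := fun e he => (hstar e he).nonneg.posSemidef
  have hT : ((∑ e ∈ E, h e) * (∑ e ∈ E, h e)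
      - (((2 * (m - 1/2) : ℝ)) : ℂ) • ∑ e ∈ E, h e).PosSemidef := by
    have hcoeff : (((2 * (m - 1/2) : ℝ)) : ℂ) = 2 * (m : ℂ) - 1 := by push_cast; ring
    rw [hcoeff, Sym2.mul_self_sub_smul_eq_sum_add E hE h fun e he => (hstar e he).isIdempotentElem]
    refine (posSemidef_sum _ fun v _ => ?_).add
      (posSemidef_sum E fun e he => posSemidef_sum _ fun f hf => ?_)
    · exact (posSemidef_sum _ fun e he => hpsd e (mem_filter.1 he).1).mul_self_sub_smul_of_le
        (hsub v) (ciInf_le (Set.finite_range Δ).bddBelow v)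
    · obtain ⟨hfE, hdisj⟩ := mem_filter.1 hf
      have hef : ∀ v, v ∈ e → v ∉ f := fun v hve hvf =>
        disjoint_left.1 hdisj (Sym2.mem_toFinset.2 hve) (Sym2.mem_toFinset.2 hvf)
      exact ((hstar e he).mul (hstar f hfE) (hcomm e he f hfE hef)).nonneg.posSemidef
  exact ⟨hT, fun i hi => hHerm.le_eigenvalues_of_posSemidef_mul_self_sub_smul
    (posSemidef_sum E hpsd) hT hi⟩

/-- Knabe bound on connected graphs: if `H = ∑_{e ∈ E} h_e` is a sum of projectors over the
edges of a finite connected graph `G` (with terms on disjoint edges commuting), and for each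
vertex `v` the subsystem operator `(∑_{j ∈ N(v)} h_{vj})²` is bounded below by
`Δ v · ∑_{j ∈ N(v)} h_{vj}` with `Δ v ≥ 0`, then
`H² ≥ 2(min_v Δ v − 1/2) · H`, and consequently every nonzero eigenvalue of `H`
(in particular the spectral gap) is at least `2(min_v Δ v − 1/2)`. -/
theorem stmt2 {V : Type} [Fintype V] [DecidableEq V]
    (G : SimpleGraph V) [DecidableRel G.Adj] (hconn : G.Connected)
    {N : ℕ} (h : Sym2 V → Matrix (Fin N) (Fin N) ℂ)
    (hproj : ∀ e ∈ G.edgeFinset, (h e).IsHermitian ∧ h e * h e = h e)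
    (hcomm : ∀ e ∈ G.edgeFinset, ∀ f ∈ G.edgeFinset,
      (∀ v : V, v ∈ e → v ∉ f) → Commute (h e) (h f))
    (Δ : V → ℝ) (hΔ : ∀ v, 0 ≤ Δ v)
    (hsub : ∀ v : V,
      ((∑ u ∈ G.neighborFinset v, h s(v, u)) * (∑ u ∈ G.neighborFinset v, h s(v, u))
        - ((Δ v : ℂ)) • (∑ u ∈ G.neighborFinset v, h s(v, u))).PosSemidef)
    (hHerm : (∑ e ∈ G.edgeFinset, h e).IsHermitian) :
    ((∑ e ∈ G.edgeFinset, h e) * (∑ e ∈ G.edgeFinset, h e)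
      - (((2 * ((⨅ v : V, Δ v) - 1/2) : ℝ) : ℂ)) • (∑ e ∈ G.edgeFinset, h e)).PosSemidef
    ∧ ∀ i, hHerm.eigenvalues i ≠ 0 →
        2 * ((⨅ v : V, Δ v) - 1/2) ≤ hHerm.eigenvalues i :=
  stmt2_general G h hproj hcomm Δ hsub hHerm
end

section
/- Knabe bound for complete graphs: Let H = Σ_{1≤i<j≤n} h_{i,j} be a sum of orthogonal projectors on a finite-dimensional Hilbert space, and suppose for each m-element subset T of {1,…,n} (for a fixed m with 3 ≤ m ≤ n) one has (Σ_{{i,j}⊆T} h_{i,j})² ≥ Δ_m · Σ_{{i,j}⊆T} h_{i,j}. Then H² ≥ [((n−2)/(m−2))(Δ_m − (n−m)/(n−2))] H, and hence the spectral gap of H is at least ((n−2)/(m−2))(Δ_m − (n−m)/(n−2)). -/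
/-!
Knabe's double-counting argument. Write `H_T` for the sum of the edge projectors `h_p` with both
ends in the `m`-set `T`, and `N(p,q)` for the number of `m`-sets containing the edges `p` and `q`:
`N(p,p) = a = C(n-2,m-2)`, `N(p,q) = b = C(n-3,m-3)` when `p ≠ q` share a vertex, and
`N(p,q) ≤ b` when they are disjoint. Summing over all `m`-sets, `∑_T H_T = a H` and
`∑_T H_T² = ∑_{p,q} N(p,q) h_p h_q`, so
`b H² - b c H = ∑_T (H_T² - Δ H_T) + ∑_{p,q disjoint} (b - N(p,q)) h_p h_q`
with `b c = Δ a - (a - b)`. Disjoint projectors commute, so their products are positive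
semidefinite, and so is the right-hand side. Finally `H ≥ 0`, and on an eigenvector with
eigenvalue `λ > 0` the inequality `H² ≥ c H` reads `λ² ≥ c λ`.
-/

open ComplexOrder Finset Matrix

section DoubleCounting

variable {κ ι : Type*} (𝒯 : Finset κ) (E : Finset ι) (P : κ → ι → Prop)
  [∀ T, DecidablePred (P T)]

theorem sum_sum_filter_eq_sum_card_nsmul {M : Type*} [AddCommMonoid M] (f : ι → M) :
    ∑ T ∈ 𝒯, ∑ p ∈ E with P T p, f p = ∑ p ∈ E, #{T ∈ 𝒯 | P T p} • f p := by
  rw [sum_comm' (t' := E) (s' := fun p => {T ∈ 𝒯 | P T p}) (by simp; tauto)]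
  simp_rw [sum_const]

theorem sum_sum_filter_mul_sum_filter {R : Type*} [NonUnitalNonAssocSemiring R] (f : ι → R) :
    ∑ T ∈ 𝒯, (∑ p ∈ E with P T p, f p) * (∑ q ∈ E with P T q, f q) =
      ∑ p ∈ E, ∑ q ∈ E, #{T ∈ 𝒯 | P T p ∧ P T q} • (f p * f q) := by
  simp_rw [sum_mul_sum, ← sum_product' (f := fun p q => f p * f q), ← filter_product]
  rw [sum_sum_filter_eq_sum_card_nsmul, sum_product]

end DoubleCounting

section SupersetCount

variable {α : Type*} [Fintype α] [DecidableEq α] {m k : ℕ} {S : Finset α}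

theorem choose_le_card_filter_superset (hSk : #S ≤ k) (hkm : k ≤ m) (hk : k ≤ Fintype.card α) :
    (Fintype.card α - k).choose (m - k) ≤ #{T ∈ powersetCard m univ | S ⊆ T} := by
  obtain ⟨S', hSS', hS'⟩ := exists_superset_card_eq hSk hk
  calc (Fintype.card α - k).choose (m - k) = #{T ∈ powersetCard m univ | S' ⊆ T} := by
        rw [card_filter_powersetCard_subset _ _ _ (subset_univ _) (hS' ▸ hkm), hS', card_univ]
    _ ≤ _ := card_le_card (monotone_filter_right _ fun _ _ => hSS'.trans)

theorem card_filter_superset_le_choose (hkS : k ≤ #S) (hkm : k ≤ m) :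
    #{T ∈ powersetCard m univ | S ⊆ T} ≤ (Fintype.card α - k).choose (m - k) := by
  obtain ⟨S', hS'S, hS'⟩ := exists_subset_card_eq hkS
  calc #{T ∈ powersetCard m univ | S ⊆ T} ≤ #{T ∈ powersetCard m univ | S' ⊆ T} :=
        card_le_card (monotone_filter_right _ fun _ _ => hS'S.trans)
    _ = _ := by
        rw [card_filter_powersetCard_subset _ _ _ (subset_univ _) (hS' ▸ hkm), hS', card_univ]

end SupersetCount

section EdgePairs

variable {α : Type*} [LinearOrder α] {p q : α × α}

theorem card_edgePair_le_three (h : ¬(p.1 ≠ q.1 ∧ p.1 ≠ q.2 ∧ p.2 ≠ q.1 ∧ p.2 ≠ q.2)) :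
    #{p.1, p.2, q.1, q.2} ≤ 3 := by
  have : ∃ x y z : α, {p.1, p.2, q.1, q.2} ⊆ ({x, y, z} : Finset α) := by
    by_cases h1 : p.1 = q.1
    · exact ⟨p.1, p.2, q.2, by simp [insert_subset_iff, h1]⟩
    by_cases h2 : p.1 = q.2
    · exact ⟨p.1, p.2, q.1, by simp [insert_subset_iff, h2]⟩
    by_cases h3 : p.2 = q.1
    · exact ⟨p.1, p.2, q.2, by simp [h3]⟩
    · exact ⟨p.1, p.2, q.1, by simp [insert_subset_iff, show p.2 = q.2 by tauto]⟩
  obtain ⟨x, y, z, hS⟩ := this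
  exact (card_le_card hS).trans card_le_three

theorem three_le_card_edgePair (hp : p.1 < p.2) (hq : q.1 < q.2) (hpq : p ≠ q) :
    3 ≤ #{p.1, p.2, q.1, q.2} := by
  rw [Nat.succ_le_iff, two_lt_card]
  have : q.1 ∉ ({p.1, p.2} : Finset α) ∨ q.2 ∉ ({p.1, p.2} : Finset α) := by
    by_contra! h
    simp only [mem_insert, mem_singleton] at h
    apply hpq
    ext <;> grind
  rcases this with h | h <;> simp only [mem_insert, mem_singleton, not_or] at h
  · exact ⟨p.1, by simp, p.2, by simp, q.1, by simp, hp.ne, Ne.symm h.1, Ne.symm h.2⟩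
  · exact ⟨p.1, by simp, p.2, by simp, q.2, by simp, hp.ne, Ne.symm h.1, Ne.symm h.2⟩

variable [Fintype α] {m : ℕ}

def edgePairCount (m : ℕ) (p q : α × α) : ℕ :=
  #{T ∈ powersetCard m (univ : Finset α) | {p.1, p.2, q.1, q.2} ⊆ T}

theorem edgePairCount_self (hp : p.1 < p.2) (hm : 2 ≤ m) :
    edgePairCount m p p = (Fintype.card α - 2).choose (m - 2) := by
  have hpair : ({p.1, p.2, p.1, p.2} : Finset α) = {p.1, p.2} := by ext; simp
  rw [edgePairCount, hpair, card_filter_powersetCard_subset _ _ _ (subset_univ _),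
    card_pair hp.ne, card_univ]
  rwa [card_pair hp.ne]

theorem edgePairCount_le (hp : p.1 < p.2) (hq : q.1 < q.2) (hpq : p ≠ q) (hm : 3 ≤ m) :
    edgePairCount m p q ≤ (Fintype.card α - 3).choose (m - 3) :=
  card_filter_superset_le_choose (three_le_card_edgePair hp hq hpq) hm

theorem choose_le_edgePairCount (h : ¬(p.1 ≠ q.1 ∧ p.1 ≠ q.2 ∧ p.2 ≠ q.1 ∧ p.2 ≠ q.2))
    (hm : 3 ≤ m) (hmα : m ≤ Fintype.card α) :
    (Fintype.card α - 3).choose (m - 3) ≤ edgePairCount m p q :=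
  choose_le_card_filter_superset (card_edgePair_le_three h) hm (hm.trans hmα)

-- `b - N p p` truncates to `0` since `N p p = a ≥ b`.
theorem edgePairCount_add_tsub (hp : p.1 < p.2) (hq : q.1 < q.2)
    (hm : 3 ≤ m) (hmα : m ≤ Fintype.card α) :
    edgePairCount m p q + ((Fintype.card α - 3).choose (m - 3) - edgePairCount m p q) =
      (Fintype.card α - 3).choose (m - 3) +
        if p = q then (Fintype.card α - 2).choose (m - 2) - (Fintype.card α - 3).choose (m - 3)
        else 0 := by
  by_cases hpq : p = q
  · subst hpq
    have := choose_le_edgePairCount (p := p) (q := p) (by simp) hm hmα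
    rw [if_pos rfl, ← edgePairCount_self hp (by omega)]
    omega
  · have := edgePairCount_le hp hq hpq hm
    rw [if_neg hpq]
    omega

end EdgePairs

section Hamiltonian

variable {α R : Type*} [Fintype α] [LinearOrder α] (h : α → α → R)

def localHamiltonian [AddCommMonoid R] (T : Finset α) : R :=
  ∑ p ∈ {p : α × α | p.1 < p.2 ∧ p.1 ∈ T ∧ p.2 ∈ T}, h p.1 p.2

def hamiltonian [AddCommMonoid R] : R :=
  ∑ p ∈ {p : α × α | p.1 < p.2}, h p.1 p.2

theorem localHamiltonian_eq_sum_filter [AddCommMonoid R] (T : Finset α) :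
    localHamiltonian h T = ∑ p ∈ {p : α × α | p.1 < p.2} with p.1 ∈ T ∧ p.2 ∈ T, h p.1 p.2 := by
  rw [localHamiltonian, filter_filter]

theorem sum_localHamiltonian [AddCommMonoid R] {m : ℕ} (hm : 2 ≤ m) :
    ∑ T ∈ powersetCard m univ, localHamiltonian h T =
      (Fintype.card α - 2).choose (m - 2) • hamiltonian h := by
  simp_rw [localHamiltonian_eq_sum_filter]
  rw [sum_sum_filter_eq_sum_card_nsmul, hamiltonian, smul_sum]
  refine sum_congr rfl fun p hp => ?_
  rw [← edgePairCount_self (mem_filter.1 hp).2 hm, edgePairCount]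
  congr 2
  ext T
  simp [insert_subset_iff]

variable [NonUnitalNonAssocSemiring R]

theorem sum_localHamiltonian_mul_self (m : ℕ) :
    ∑ T ∈ powersetCard m univ, localHamiltonian h T * localHamiltonian h T =
      ∑ p ∈ {p : α × α | p.1 < p.2}, ∑ q ∈ {p : α × α | p.1 < p.2},
        edgePairCount m p q • (h p.1 p.2 * h q.1 q.2) := by
  simp_rw [localHamiltonian_eq_sum_filter]
  rw [sum_sum_filter_mul_sum_filter]
  simp only [edgePairCount, insert_subset_iff, singleton_subset_iff, and_assoc]

theorem sum_localHamiltonian_mul_self_add {m : ℕ} (hm : 3 ≤ m) (hmα : m ≤ Fintype.card α)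
    (hidem : ∀ i j, i < j → h i j * h i j = h i j) :
    ∑ T ∈ powersetCard m univ, localHamiltonian h T * localHamiltonian h T +
        ∑ p ∈ {p : α × α | p.1 < p.2}, ∑ q ∈ {p : α × α | p.1 < p.2},
          ((Fintype.card α - 3).choose (m - 3) - edgePairCount m p q) • (h p.1 p.2 * h q.1 q.2) =
      (Fintype.card α - 3).choose (m - 3) • (hamiltonian h * hamiltonian h) +
        ((Fintype.card α - 2).choose (m - 2) - (Fintype.card α - 3).choose (m - 3)) •
          hamiltonian h := by
  rw [sum_localHamiltonian_mul_self, ← sum_add_distrib]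
  simp_rw [← sum_add_distrib, ← add_smul]
  rw [hamiltonian, sum_mul_sum, smul_sum, smul_sum, ← sum_add_distrib]
  refine sum_congr rfl fun p hp => ?_
  have hp' := (mem_filter.1 hp).2
  rw [sum_congr rfl fun q hq => by
      rw [edgePairCount_add_tsub hp' (mem_filter.1 hq).2 hm hmα, add_smul, ite_smul, zero_smul],
    sum_add_distrib, sum_ite_eq, if_pos hp, hidem p.1 p.2 hp', smul_sum]

end Hamiltonian

noncomputable def knabeBound (n m : ℕ) (Δ : ℝ) : ℝ :=
  ((n : ℝ) - 2) / ((m : ℝ) - 2) * (Δ - ((n : ℝ) - (m : ℝ)) / ((n : ℝ) - 2))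

theorem choose_mul_knabeBound {n m : ℕ} (hm : 3 ≤ m) (hmn : m ≤ n) (Δ : ℝ) :
    ((n - 3).choose (m - 3) : ℝ) * knabeBound n m Δ =
      Δ * (n - 2).choose (m - 2) - ((n - 2).choose (m - 2) - (n - 3).choose (m - 3)) := by
  obtain ⟨n, rfl⟩ : ∃ k, n = k + 3 := ⟨n - 3, by omega⟩
  obtain ⟨m, rfl⟩ : ∃ k, m = k + 3 := ⟨m - 3, by omega⟩
  have pascal : ((n + 1).choose (m + 1) : ℝ) * (m + 1) = (n + 1) * n.choose m := by
    exact_mod_cast (Nat.add_one_mul_choose_eq n m).symm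
  simp only [knabeBound, Nat.add_sub_cancel, show n + 3 - 2 = n + 1 by omega,
    show m + 3 - 2 = m + 1 by omega]
  push_cast
  rw [show (n : ℝ) + 3 - 2 = n + 1 by ring, show (m : ℝ) + 3 - 2 = m + 1 by ring]
  field_simp
  linear_combination (1 - Δ) * pascal

namespace Matrix

variable {ι 𝕜 : Type*} [Fintype ι] [RCLike 𝕜] {A B : Matrix ι ι 𝕜}

theorem IsHermitian.posSemidef_of_isIdempotentElem (hA : A.IsHermitian)
    (hAA : IsIdempotentElem A) : A.PosSemidef := by
  simpa only [hA.eq, hAA.eq] using posSemidef_conjTranspose_mul_self A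

theorem IsHermitian.posSemidef_mul_of_commute (hA : A.IsHermitian) (hAA : IsIdempotentElem A)
    (hB : B.PosSemidef) (hAB : Commute A B) : (A * B).PosSemidef := by
  have : A * B = A * B * Aᴴ := by rw [hA.eq, mul_assoc, ← hAB.eq, ← mul_assoc, hAA.eq]
  exact this ▸ hB.mul_mul_conjTranspose_same A

variable [DecidableEq ι]

theorem PosSemidef.le_eigenvalue_of_mul_self_sub_smul (hA : A.PosSemidef) {c : ℝ}
    (hc : (A * A - c • A).PosSemidef) (i : ι) (hi : hA.isHermitian.eigenvalues i ≠ 0) :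
    c ≤ hA.isHermitian.eigenvalues i := by
  set v := hA.isHermitian.eigenvectorBasis i
  set μ := hA.isHermitian.eigenvalues i
  have hv : A *ᵥ v = μ • (v : ι → 𝕜) := hA.isHermitian.mulVec_eigenvectorBasis i
  have hvv : star (v : ι → 𝕜) ⬝ᵥ v = 1 := by
    rw [dotProduct_comm, ← EuclideanSpace.inner_eq_star_dotProduct,
      inner_self_eq_norm_sq_to_K, hA.isHermitian.eigenvectorBasis.orthonormal.1 i]
    simp
  have hquad := hc.dotProduct_mulVec_nonneg v
  rw [sub_mulVec, ← mulVec_mulVec, hv, mulVec_smul, hv, smul_mulVec, hv, smul_smul, smul_smul,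
    ← sub_smul, dotProduct_smul, hvv, RCLike.real_smul_eq_coe_mul, mul_one,
    RCLike.ofReal_nonneg] at hquad
  have hμ : 0 < μ := (hA.eigenvalues_nonneg i).lt_of_ne' hi
  nlinarith

end Matrix

section Knabe

variable {α ι 𝕜 : Type*} [Fintype α] [LinearOrder α] [Fintype ι] [RCLike 𝕜] {m : ℕ}
  {h : α → α → Matrix ι ι 𝕜}

theorem posSemidef_sum_tsub_edgePairCount_smul (hm : 3 ≤ m) (hmα : m ≤ Fintype.card α)
    (hproj : ∀ i j : α, i < j → (h i j).IsHermitian ∧ h i j * h i j = h i j)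
    (hcomm : ∀ i j k l : α, i < j → k < l → i ≠ k → i ≠ l → j ≠ k → j ≠ l →
      Commute (h i j) (h k l)) :
    (∑ p ∈ {p : α × α | p.1 < p.2}, ∑ q ∈ {p : α × α | p.1 < p.2},
      ((Fintype.card α - 3).choose (m - 3) - edgePairCount m p q) •
        (h p.1 p.2 * h q.1 q.2)).PosSemidef := by
  refine posSemidef_sum _ fun p hp => posSemidef_sum _ fun q hq => ?_
  have hp' := (mem_filter.1 hp).2
  have hq' := (mem_filter.1 hq).2
  by_cases hdisj : p.1 ≠ q.1 ∧ p.1 ≠ q.2 ∧ p.2 ≠ q.1 ∧ p.2 ≠ q.2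
  · obtain ⟨h11, h12, h21, h22⟩ := hdisj
    refine PosSemidef.smul ?_ (Nat.zero_le _)
    exact (hproj _ _ hp').1.posSemidef_mul_of_commute (hproj _ _ hp').2
      ((hproj _ _ hq').1.posSemidef_of_isIdempotentElem (hproj _ _ hq').2)
      (hcomm _ _ _ _ hp' hq' h11 h12 h21 h22)
  · rw [Nat.sub_eq_zero_of_le (choose_le_edgePairCount hdisj hm hmα), zero_smul]
    exact PosSemidef.zero

theorem posSemidef_hamiltonian
    (hproj : ∀ i j : α, i < j → (h i j).IsHermitian ∧ h i j * h i j = h i j) :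
    (hamiltonian h).PosSemidef :=
  posSemidef_sum _ fun _ hp => (hproj _ _ (mem_filter.1 hp).2).1.posSemidef_of_isIdempotentElem
    (hproj _ _ (mem_filter.1 hp).2).2

theorem posSemidef_hamiltonian_mul_self_sub (hm : 3 ≤ m) (hmα : m ≤ Fintype.card α)
    (hproj : ∀ i j : α, i < j → (h i j).IsHermitian ∧ h i j * h i j = h i j)
    (hcomm : ∀ i j k l : α, i < j → k < l → i ≠ k → i ≠ l → j ≠ k → j ≠ l →
      Commute (h i j) (h k l)) (Δ : ℝ)
    (hsub : ∀ T ∈ powersetCard m univ,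
      (localHamiltonian h T * localHamiltonian h T - Δ • localHamiltonian h T).PosSemidef) :
    (hamiltonian h * hamiltonian h -
      knabeBound (Fintype.card α) m Δ • hamiltonian h).PosSemidef := by
  have hb : 0 < (Fintype.card α - 3).choose (m - 3) := Nat.choose_pos (by omega)
  have hba : (Fintype.card α - 3).choose (m - 3) ≤ (Fintype.card α - 2).choose (m - 2) := by
    rw [show Fintype.card α - 2 = Fintype.card α - 3 + 1 by omega, show m - 2 = m - 3 + 1 by omega,
      Nat.choose_succ_succ]
    exact Nat.le_add_right _ _
  have key : ∑ T ∈ powersetCard m univ,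
        (localHamiltonian h T * localHamiltonian h T - Δ • localHamiltonian h T) +
      ∑ p ∈ {p : α × α | p.1 < p.2}, ∑ q ∈ {p : α × α | p.1 < p.2},
        ((Fintype.card α - 3).choose (m - 3) - edgePairCount m p q) • (h p.1 p.2 * h q.1 q.2) =
      ((Fintype.card α - 3).choose (m - 3) : ℝ) •
        (hamiltonian h * hamiltonian h - knabeBound (Fintype.card α) m Δ • hamiltonian h) := by
    rw [sum_sub_distrib, ← smul_sum, sum_localHamiltonian h (by omega), sub_add_eq_add_sub,
      sum_localHamiltonian_mul_self_add h hm hmα fun i j hij => (hproj i j hij).2]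
    simp only [← Nat.cast_smul_eq_nsmul ℝ]
    rw [Nat.cast_sub hba]
    linear_combination (norm := module) (choose_mul_knabeBound hm hmα Δ) • hamiltonian h
  have hbY := key ▸
    (posSemidef_sum _ hsub).add (posSemidef_sum_tsub_edgePairCount_smul hm hmα hproj hcomm)
  have hb' : ((Fintype.card α - 3).choose (m - 3) : ℝ) ≠ 0 := by positivity
  simpa only [inv_smul_smul₀ hb'] using hbY.smul (inv_nonneg.2 (Nat.cast_nonneg (α := ℝ)
    ((Fintype.card α - 3).choose (m - 3))))

end Knabe

/-- Knabe bound for complete graphs: if `H = ∑_{i<j} h_{i,j}` is a sum of projectors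
(terms on disjoint edges commuting), and for every `m`-element subset `T` of `{1,…,n}`
`(∑_{{i,j}⊆T} h_{i,j})² ≥ Δm · ∑_{{i,j}⊆T} h_{i,j}`, then
`H² ≥ ((n−2)/(m−2))(Δm − (n−m)/(n−2)) · H`, hence every nonzero eigenvalue of `H`
(in particular the spectral gap) is at least `((n−2)/(m−2))(Δm − (n−m)/(n−2))`. -/
theorem stmt4 {N : ℕ} (n m : ℕ) (hm : 3 ≤ m) (hmn : m ≤ n)
    (h : Fin n → Fin n → Matrix (Fin N) (Fin N) ℂ)
    (hproj : ∀ i j : Fin n, i < j → (h i j).IsHermitian ∧ h i j * h i j = h i j)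
    (hcomm : ∀ i j k l : Fin n, i < j → k < l → i ≠ k → i ≠ l → j ≠ k → j ≠ l →
      Commute (h i j) (h k l))
    (Δm : ℝ)
    (hsub : ∀ T ∈ Finset.powersetCard m (Finset.univ : Finset (Fin n)),
      ((∑ p ∈ Finset.univ.filter (fun p : Fin n × Fin n => p.1 < p.2 ∧ p.1 ∈ T ∧ p.2 ∈ T),
          h p.1 p.2)
        * (∑ p ∈ Finset.univ.filter (fun p : Fin n × Fin n => p.1 < p.2 ∧ p.1 ∈ T ∧ p.2 ∈ T),
            h p.1 p.2)
        - ((Δm : ℂ)) •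
          (∑ p ∈ Finset.univ.filter (fun p : Fin n × Fin n => p.1 < p.2 ∧ p.1 ∈ T ∧ p.2 ∈ T),
            h p.1 p.2)).PosSemidef)
    (hHerm : (∑ p ∈ Finset.univ.filter (fun p : Fin n × Fin n => p.1 < p.2),
        h p.1 p.2).IsHermitian) :
    ((∑ p ∈ Finset.univ.filter (fun p : Fin n × Fin n => p.1 < p.2), h p.1 p.2)
      * (∑ p ∈ Finset.univ.filter (fun p : Fin n × Fin n => p.1 < p.2), h p.1 p.2)
      - (((((n : ℝ) - 2) / ((m : ℝ) - 2) * (Δm - ((n : ℝ) - (m : ℝ)) / ((n : ℝ) - 2)) : ℝ) : ℂ))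
          • (∑ p ∈ Finset.univ.filter (fun p : Fin n × Fin n => p.1 < p.2),
              h p.1 p.2)).PosSemidef
    ∧ ∀ i, hHerm.eigenvalues i ≠ 0 →
        ((n : ℝ) - 2) / ((m : ℝ) - 2) * (Δm - ((n : ℝ) - (m : ℝ)) / ((n : ℝ) - 2))
          ≤ hHerm.eigenvalues i := by
  have hmα : m ≤ Fintype.card (Fin n) := by simpa using hmn
  have hbound := posSemidef_hamiltonian_mul_self_sub hm hmα hproj hcomm Δm fun T hT => by
    simpa only [Complex.coe_smul, localHamiltonian] using hsub T hT
  rw [Fintype.card_fin, ← Complex.coe_smul] at hbound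
  exact ⟨hbound, PosSemidef.le_eigenvalue_of_mul_self_sub_smul (posSemidef_hamiltonian hproj) hbound⟩
end

section
/- If a leaf of a rooted tree is assigned depth d by the depth-assignment process, then the path from the root to that leaf must contain at least ⌊d/2⌋ vertices of degree at least 3. Equivalently (contrapositive formulation): along any root-to-leaf path containing k vertices of degree ≥ 3, the assigned depth of the leaf is at most 2(k−1) + 3 ≤ 2k + 1. -/
/-- Along a root-to-leaf path `v_0, …, v_L` of a rooted tree, with depth labels satisfying the
depth-assignment axioms of the recursive algorithm (the root has depth 0; between consecutive
degree-≥3 vertices the depth label increases by at most 2; from the root to the first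
degree-≥3 vertex it increases by at most 1; after the last degree-≥3 vertex it increases by
at most 2; if there are no degree-≥3 vertices the leaf has depth ≤ 1), a leaf assigned depth
`d` forces at least `⌊d/2⌋` vertices of degree ≥ 3 on the path (equivalently, with `k` such
vertices the assigned depth of the leaf is at most `2(k−1)+3 ≤ 2k+1`). Here `big p` means
position `p` on the path carries a vertex of degree ≥ 3. -/
theorem stmt9 (L : ℕ) (depth : ℕ → ℕ) (big : ℕ → Prop) [DecidablePred big]
    (hroot : depth 0 = 0)
    (hconsec : ∀ p q, p < q → q ≤ L → big p → big q →
      (∀ r, p < r → r < q → ¬ big r) → depth q ≤ depth p + 2)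
    (hfirst : ∀ p, p ≤ L → big p → (∀ r, r < p → ¬ big r) → depth p ≤ depth 0 + 1)
    (hlast : ∀ p, p ≤ L → big p → (∀ r, p < r → r ≤ L → ¬ big r) → depth L ≤ depth p + 2)
    (hnone : (∀ r, r ≤ L → ¬ big r) → depth L ≤ 1) :
    depth L / 2 ≤ ((Finset.range (L + 1)).filter big).card := by
  have key : ∀ p, p ≤ L → big p →
      depth p + 1 ≤ 2 * ((Finset.range (p + 1)).filter big).card := by
    intro p
    induction p using Nat.strong_induction_on with
    | _ p ih =>
      intro hpL hbp
      by_cases h : ∃ r < p, big r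
      · -- take the maximum such r
        have hne : ((Finset.range p).filter big).Nonempty := by
          obtain ⟨r, hr, hbr⟩ := h
          exact ⟨r, by simp [Finset.mem_filter, Finset.mem_range, hr, hbr]⟩
        set q := ((Finset.range p).filter big).max' hne with hq
        have hqmem := ((Finset.range p).filter big).max'_mem hne
        rw [Finset.mem_filter, Finset.mem_range] at hqmem
        obtain ⟨hqp, hbq⟩ := hqmem
        have hmaxr : ∀ r, q < r → r < p → ¬ big r := by
          intro r h1 h2 hbr
          have : r ≤ q := Finset.le_max' _ r
            (by simp [Finset.mem_filter, Finset.mem_range, h2, hbr])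
          omega
        have hstep := hconsec q p hqp hpL hbq hbp hmaxr
        have hq1 := ih q hqp (le_trans hqp.le hpL) hbq
        have hsub : (Finset.range (q + 1)).filter big ⊆
            ((Finset.range (p + 1)).filter big).erase p := by
          intro x hx
          rw [Finset.mem_filter, Finset.mem_range] at hx
          rw [Finset.mem_erase, Finset.mem_filter, Finset.mem_range]
          exact ⟨by omega, by omega, hx.2⟩
        have hcard := Finset.card_le_card hsub
        have hpmem : p ∈ (Finset.range (p + 1)).filter big := by
          simp [Finset.mem_filter, Finset.mem_range, hbp]
        have := Finset.card_erase_of_mem hpmem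
        have hpos : 0 < ((Finset.range (p + 1)).filter big).card :=
          Finset.card_pos.mpr ⟨p, hpmem⟩
        omega
      · push_neg at h
        have := hfirst p hpL hbp h
        have hpmem : p ∈ (Finset.range (p + 1)).filter big := by
          simp [Finset.mem_filter, Finset.mem_range, hbp]
        have hpos : 0 < ((Finset.range (p + 1)).filter big).card :=
          Finset.card_pos.mpr ⟨p, hpmem⟩
        omega
  by_cases h : ∃ r ≤ L, big r
  · have hne : ((Finset.range (L + 1)).filter big).Nonempty := by
      obtain ⟨r, hr, hbr⟩ := h
      exact ⟨r, by simp [Finset.mem_filter, Finset.mem_range, Nat.lt_succ_of_le hr, hbr]⟩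
    set m := ((Finset.range (L + 1)).filter big).max' hne with hm
    have hmmem := ((Finset.range (L + 1)).filter big).max'_mem hne
    rw [Finset.mem_filter, Finset.mem_range] at hmmem
    obtain ⟨hmL, hbm⟩ := hmmem
    have hmL' : m ≤ L := by omega
    have hmaxr : ∀ r, m < r → r ≤ L → ¬ big r := by
      intro r h1 h2 hbr
      have : r ≤ m := Finset.le_max' _ r
        (by simp [Finset.mem_filter, Finset.mem_range, Nat.lt_succ_of_le h2, hbr])
      omega
    have h1 := hlast m hmL' hbm hmaxr
    have h2 := key m hmL' hbm
    have hsub : (Finset.range (m + 1)).filter big ⊆ (Finset.range (L + 1)).filter big := by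
      intro x hx
      rw [Finset.mem_filter, Finset.mem_range] at hx ⊢
      exact ⟨by omega, hx.2⟩
    have hcard := Finset.card_le_card hsub
    omega
  · push_neg at h
    have := hnone h
    omega
end

section
/- Path-to-star identity for swap-invariant projectors: Let m_{(a,b)} denote operators on a tensor product Hilbert space ⊗_{v} ℋ_v, acting nontrivially only on factors a and b, such that m_{(a,b)} · SWAP_{(a,b)} = SWAP_{(a,b)} · m_{(a,b)} = m_{(a,b)}, where SWAP_{(a,b)} exchanges tensor factors a and b. Then for vertices v₁,…,v_p, the sequential path product satisfies m_{(v₁,v₂)} m_{(v₂,v₃)} ⋯ m_{(v_{p−1},v_p)} = m_{(v₁,v₂)} m_{(v₁,v₃)} ⋯ m_{(v₁,v_p)} · W, where W is the cyclic permutation operator on the factors v₁,…,v_p sending v₁ → v_p, v₂ → v₁, …, v_p → v_{p−1}. -/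
/-- The operator on `⊗_{u ∈ V} ℂ^d` (identified with functions `(V → Fin d) → ℂ`) acting
nontrivially only on the sites `v, w`, with two-site kernel `Q`. -/
noncomputable def localOp {V : Type} [Fintype V] [DecidableEq V] (d : ℕ) (v w : V)
    (Q : Matrix (Fin d × Fin d) (Fin d × Fin d) ℂ) : Matrix (V → Fin d) (V → Fin d) ℂ :=
  fun x y => if ∀ u, u ≠ v → u ≠ w → x u = y u then Q (x v, x w) (y v, y w) else 0

/-- The unitary permuting the tensor factors of `⊗_{u ∈ V} ℂ^d` according to a permutation
`σ` of the sites. -/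
noncomputable def permMatrix {V : Type} [Fintype V] [DecidableEq V] (d : ℕ)
    (σ : Equiv.Perm V) : Matrix (V → Fin d) (V → Fin d) ℂ :=
  fun x y => if x = y ∘ σ then 1 else 0


/-! Each `m_{(a,b)}` absorbs `SWAP_{(a,b)}` on the right, and pushing a permutation through a
two-site operator relabels its sites. So in `m_{(v₀,v₁)} · (path from v₁)`, written by induction
as `m_{(v₀,v₁)} · (star at v₁) · W'`, one inserts `SWAP_{(v₀,v₁)}` after the first factor and
pushes it to the right: it turns the star at `v₁` into the star at `v₀` and merges with `W'`
into `W`. -/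

variable {V : Type} [Fintype V] [DecidableEq V] {d : ℕ}

theorem mul_permMatrix_apply (A : Matrix (V → Fin d) (V → Fin d) ℂ) (σ : Equiv.Perm V)
    (x y : V → Fin d) : (A * permMatrix d σ) x y = A x (y ∘ σ) := by
  rw [Matrix.mul_apply, Finset.sum_eq_single (y ∘ σ)] <;> simp_all [permMatrix]

theorem permMatrix_mul_apply (σ : Equiv.Perm V) (A : Matrix (V → Fin d) (V → Fin d) ℂ)
    (x y : V → Fin d) : (permMatrix d σ * A) x y = A (x ∘ σ.symm) y := by
  rw [Matrix.mul_apply, Finset.sum_eq_single (x ∘ σ.symm)]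
  · simp [permMatrix, Function.comp_assoc]
  · rintro z - hz
    simp only [permMatrix, ite_mul, one_mul, zero_mul, ite_eq_right_iff]
    rintro rfl
    exact absurd (by ext; simp) hz
  · simp

theorem permMatrix_one : permMatrix d (1 : Equiv.Perm V) = 1 := by
  ext x y
  simp [permMatrix, Matrix.one_apply]

theorem permMatrix_mul (σ τ : Equiv.Perm V) :
    permMatrix d σ * permMatrix d τ = permMatrix d (τ * σ) := by
  ext x y
  rw [mul_permMatrix_apply]
  rfl

theorem localOp_mul_permMatrix (a b : V) (Q : Matrix (Fin d × Fin d) (Fin d × Fin d) ℂ)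
    (σ : Equiv.Perm V) :
    localOp d a b Q * permMatrix d σ = permMatrix d σ * localOp d (σ a) (σ b) Q := by
  ext x y
  simp only [mul_permMatrix_apply, permMatrix_mul_apply, localOp, Function.comp_apply,
    Equiv.symm_apply_apply]
  congr 1
  exact propext (σ.forall_congr fun u => by simp)

theorem prod_map_localOp_mul_permMatrix (Q : Matrix (Fin d × Fin d) (Fin d × Fin d) ℂ)
    (σ : Equiv.Perm V) (a : V) (l : List V) :
    (l.map (localOp d a · Q)).prod * permMatrix d σ
      = permMatrix d σ * (l.map fun c => localOp d (σ a) (σ c) Q).prod := by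
  induction l with
  | nil => simp
  | cons c l ih =>
    rw [List.map_cons, List.map_cons, List.prod_cons, List.prod_cons, mul_assoc, ih,
      ← mul_assoc, localOp_mul_permMatrix, mul_assoc]

variable (d) in
noncomputable def pathProd (Q : Matrix (Fin d × Fin d) (Fin d × Fin d) ℂ) :
    List V → Matrix (V → Fin d) (V → Fin d) ℂ
  | a :: b :: l => localOp d a b Q * pathProd Q (b :: l)
  | _ => 1

theorem pathProd_ofFn (Q : Matrix (Fin d × Fin d) (Fin d × Fin d) ℂ) {n : ℕ}
    (v : Fin (n + 1) → V) :
    pathProd d Q (List.ofFn v)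
      = (List.ofFn fun i : Fin n => localOp d (v i.castSucc) (v i.succ) Q).prod := by
  induction n with
  | zero => rfl
  | succ n ih =>
    have ih' := ih fun i => v i.succ
    rw [List.ofFn_succ (f := fun i => v i.succ)] at ih'
    rw [List.ofFn_succ (f := v), List.ofFn_succ (f := fun i => v i.succ), List.ofFn_succ,
      List.prod_cons]
    exact congrArg (localOp d (v 0) (v 1) Q * ·) ih'

theorem pathProd_eq_prod_map_localOp_mul_permMatrix
    (Q : Matrix (Fin d × Fin d) (Fin d × Fin d) ℂ)
    (hswap : ∀ a b : V, a ≠ b →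
      localOp d a b Q * permMatrix d (Equiv.swap a b) = localOp d a b Q)
    (a : V) (l : List V) (hl : (a :: l).Nodup) :
    pathProd d Q (a :: l)
      = (l.map (localOp d a · Q)).prod * permMatrix d (a :: l).reverse.formPerm := by
  induction l generalizing a with
  | nil => simp [pathProd, permMatrix_one]
  | cons b l ih =>
    obtain ⟨hab, ha⟩ : a ≠ b ∧ a ∉ l := by simpa using (List.nodup_cons.mp hl).1
    have hbl := (List.nodup_cons.mp hl).2
    have hb : b ∉ l := (List.nodup_cons.mp hbl).1
    set σ := Equiv.swap a b
    have hstar : (l.map fun c => localOp d (σ a) (σ c) Q) = l.map (localOp d b · Q) :=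
      List.map_congr_left fun c hc => by
        rw [Equiv.swap_apply_left, Equiv.swap_apply_of_ne_of_ne (ne_of_mem_of_not_mem hc ha)
          (ne_of_mem_of_not_mem hc hb)]
    have hcycle : (a :: b :: l).reverse.formPerm = (b :: l).reverse.formPerm * σ := by
      rw [List.formPerm_reverse, List.formPerm_reverse, List.formPerm_cons_cons, mul_inv_rev,
        Equiv.swap_inv]
    calc pathProd d Q (a :: b :: l)
        = localOp d a b Q * permMatrix d σ * (l.map (localOp d b · Q)).prod
            * permMatrix d (b :: l).reverse.formPerm := by
          rw [hswap a b hab, mul_assoc, ← ih b hbl]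
          rfl
      _ = ((b :: l).map (localOp d a · Q)).prod * permMatrix d (a :: b :: l).reverse.formPerm := by
          rw [mul_assoc _ (permMatrix d σ), ← hstar, ← prod_map_localOp_mul_permMatrix, hcycle,
            ← permMatrix_mul]
          simp only [List.map_cons, List.prod_cons, mul_assoc]

/-- Path-to-star identity for swap-invariant two-site operators: if the two-site operator
`m_{(a,b)} = localOp d a b Q` satisfies `m·SWAP = SWAP·m = m`, then for distinct vertices
`v₀, …, v_{p+1}` the sequential path product `m_{(v₀,v₁)} m_{(v₁,v₂)} ⋯ m_{(v_p,v_{p+1})}`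
equals the star product `m_{(v₀,v₁)} m_{(v₀,v₂)} ⋯ m_{(v₀,v_{p+1})}` times the cyclic
permutation operator `W` sending `v₀ → v_{p+1}` and `v_i → v_{i−1}`. -/
theorem stmt16 {V : Type} [Fintype V] [DecidableEq V] (d p : ℕ)
    (Q : Matrix (Fin d × Fin d) (Fin d × Fin d) ℂ)
    (hswap : ∀ a b : V, a ≠ b →
      localOp d a b Q * permMatrix d (Equiv.swap a b) = localOp d a b Q ∧
      permMatrix d (Equiv.swap a b) * localOp d a b Q = localOp d a b Q)
    (v : Fin (p + 2) → V) (hv : Function.Injective v) :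
    (List.ofFn fun i : Fin (p + 1) => localOp d (v i.castSucc) (v i.succ) Q).prod
      = (List.ofFn fun i : Fin (p + 1) => localOp d (v 0) (v i.succ) Q).prod
        * permMatrix d ((List.ofFn v).reverse.formPerm) := by
  have hnodup : (v 0 :: List.ofFn fun i => v i.succ).Nodup :=
    List.ofFn_succ (f := v) ▸ List.nodup_ofFn.mpr hv
  have h := pathProd_eq_prod_map_localOp_mul_permMatrix Q (fun a b hab => (hswap a b hab).1)
    (v 0) _ hnodup
  rwa [← List.ofFn_succ, List.map_ofFn, pathProd_ofFn] at h
end
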